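/- For all w₁, w₂ ∈ 𝔥 one has w₁e₁ ⊛̃ w₂e₁ = (w₁ * w₂)e₁, where e₁ = -y and * is the usual harmonic (stuffle) product. -/

import Mathlib

open scoped BigOperators

abbrev Ltr := Fin 2

/-- `𝔥 = ℚ⟨x,y⟩`, realized as the monoid algebra of the free monoid on two letters. -/
abbrev H := MonoidAlgebra ℚ (FreeMonoid Ltr)

/-- The word `u₁⋯u_m` as an element of `𝔥`. -/
noncomputable def wrd (l : List Ltr) : H := MonoidAlgebra.of ℚ (FreeMonoid Ltr) (FreeMonoid.ofList l)

/-- The generator `x`. -/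
noncomputable def Xh : H := wrd [0]
/-- The generator `y`. -/
noncomputable def Yh : H := wrd [1]

/-- `e₀ = x`, `e₁ = -y`. -/
noncomputable def eH (a : Ltr) : H := if a = 0 then Xh else -Yh

/-- The product `e_{a₁}⋯e_{a_m} ∈ 𝔥` for an `e`-word. -/
noncomputable def ew (l : List Ltr) : H := ((-1 : ℚ) ^ (l.count 1)) • wrd l

/-- The symmetric harmonic product on basis `e`-words:
`e_a ⊛̃ e_{b₁}⋯e_{bₙ} = e_{b₁}⋯e_{bₙ} ⊛̃ e_a = e_{ab₁}⋯e_{abₙ}` and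
`e_a w₁ ⊛̃ e_b w₂ = e_{ab}(w₁ ⊛̃ e_b w₂) + e_{ab}(e_a w₁ ⊛̃ w₂) - e_{ab}e₀(w₁ ⊛̃ w₂)`. -/
noncomputable def mstE : List Ltr → List Ltr → H
  | [a], b :: bs => ew ((b :: bs).map (fun c => a * c))
  | a :: a' :: as, [b] => ew ((a :: a' :: as).map (fun c => c * b))
  | a :: a' :: as, b :: b' :: bs =>
      eH (a * b) * mstE (a' :: as) (b :: b' :: bs)
      + eH (a * b) * mstE (a :: a' :: as) (b' :: bs)
      - eH (a * b) * Xh * mstE (a' :: as) (b' :: bs)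
  | _, _ => 0
termination_by l₁ l₂ => l₁.length + l₂.length

/-- The symmetric harmonic product `⊛̃ : 𝔥' ⊗ 𝔥' → 𝔥'`, extended bilinearly
(using that the word `u₁⋯u_m` equals `(-1)^{#{i : uᵢ = y}} e_{u₁}⋯e_{u_m}`). -/
noncomputable def mst (f g : H) : H :=
  f.coeff.sum fun u cu => g.coeff.sum fun v cv =>
    (cu * cv * (-1 : ℚ) ^ ((FreeMonoid.toList u).count 1)
      * (-1 : ℚ) ^ ((FreeMonoid.toList v).count 1)) •
      mstE (FreeMonoid.toList u) (FreeMonoid.toList v)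

/-- Letter produced when stuffling letters `u, v`: `y` iff both are `y`, else `x`. -/
noncomputable def ellt (a b : Ltr) : H := if a = 1 ∧ b = 1 then Yh else Xh
def cc1 (a b : Ltr) : ℚ := if a = 1 ∧ b = 0 then -1 else 1
def cc2 (a b : Ltr) : ℚ := if a = 0 ∧ b = 1 then -1 else 1
def cc3 (a b : Ltr) : ℚ := if a = 0 ∧ b = 0 then -1 else 1

/-- The harmonic (stuffle) product on words of `𝔥`: on `𝔥¹` it is Hoffman's harmonic
product defined by `w*1 = 1*w = w` and
`z_k w₁ * z_l w₂ = z_k(w₁ * z_l w₂) + z_l(z_k w₁ * w₂) + z_{k+l}(w₁ * w₂)` with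
`z_n = yx^{n-1}`, extended to all of `𝔥` (compatibly, via `w₁e₁ ⊛̃ w₂e₁ = (w₁*w₂)e₁`). -/
noncomputable def starW : List Ltr → List Ltr → H
  | [], v => wrd v
  | u, [] => wrd u
  | a :: u, b :: v =>
      cc1 a b • (ellt a b * starW u (b :: v)) + cc2 a b • (ellt a b * starW (a :: u) v)
      + cc3 a b • (ellt a b * Xh * starW u v)
termination_by u v => u.length + v.length

/-- The harmonic product `*` on `𝔥`, extended bilinearly. -/
noncomputable def star (f g : H) : H :=
  f.coeff.sum fun u cu => g.coeff.sum fun v cv => (cu * cv) • starW u.toList v.toList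

/-! Up to the sign `(-1)^{#y}` that turns words into `e`-words, `w e₁` is the word `w y`.
Peeling the first letters `a, b` off `u e₁ ⊛̃ v e₁` by the recursion for `⊛̃` produces the
coefficients `e_{ab}` and `-e_{ab}e₀`; after the sign twist these are exactly the coefficients
of the stuffle recursion for `u * v`, so the two sides agree on words by induction on the total
length. Both sides being bilinear extensions of their values on words, this is enough. -/

section BilinearExtension

variable {R G M : Type*} [Semiring R] [AddCommMonoid M] [Module R M]

noncomputable def bilinExtend (K : G → G → M) (f g : MonoidAlgebra R G) : M :=
  f.coeff.sum fun u cu => g.coeff.sum fun v cv => (cu * cv) • K u v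

variable (K : G → G → M)

@[simp]
lemma bilinExtend_zero_left (g : MonoidAlgebra R G) : bilinExtend K 0 g = 0 := by
  simp [bilinExtend]

@[simp]
lemma bilinExtend_zero_right (f : MonoidAlgebra R G) : bilinExtend K f 0 = 0 := by
  simp [bilinExtend]

lemma bilinExtend_add_left (f f' g : MonoidAlgebra R G) :
    bilinExtend K (f + f') g = bilinExtend K f g + bilinExtend K f' g := by
  unfold bilinExtend
  rw [MonoidAlgebra.coeff_add, Finsupp.sum_add_index' (by simp)]
  intro u c c'
  simp only [add_mul, add_smul, Finsupp.sum_add]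

lemma bilinExtend_add_right (f g g' : MonoidAlgebra R G) :
    bilinExtend K f (g + g') = bilinExtend K f g + bilinExtend K f g' := by
  unfold bilinExtend
  rw [← Finsupp.sum_add]
  refine Finsupp.sum_congr fun u _ => ?_
  rw [MonoidAlgebra.coeff_add, Finsupp.sum_add_index' (by simp)]
  intro v d d'
  simp only [mul_add, add_smul]

lemma bilinExtend_single_single (u v : G) (c d : R) :
    bilinExtend K (MonoidAlgebra.single u c) (MonoidAlgebra.single v d) = (c * d) • K u v := by
  unfold bilinExtend
  simp only [MonoidAlgebra.coeff_single]
  rw [Finsupp.sum_single_index (by simp), Finsupp.sum_single_index (by simp)]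

end BilinearExtension

def ySign (l : List Ltr) : ℚ := (-1) ^ l.count 1

@[simp]
lemma ySign_nil : ySign [] = 1 := rfl

lemma ySign_append (l₁ l₂ : List Ltr) : ySign (l₁ ++ l₂) = ySign l₁ * ySign l₂ := by
  simp only [ySign, List.count_append, pow_add]

lemma ySign_cons (a : Ltr) (l : List Ltr) : ySign (a :: l) = ySign [a] * ySign l :=
  ySign_append [a] l

lemma ySign_append_one (l : List Ltr) : ySign (l ++ [1]) = -ySign l := by
  rw [ySign_append, show ySign [1] = -1 by norm_num [ySign], mul_neg_one]

lemma ySign_mul_self (l : List Ltr) : ySign l * ySign l = 1 := by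
  rw [ySign, ← pow_add, ← two_mul, pow_mul, neg_one_sq, one_pow]

lemma wrd_append (l₁ l₂ : List Ltr) : wrd (l₁ ++ l₂) = wrd l₁ * wrd l₂ := by
  simp [wrd]

lemma ySign_smul_ew_append_one (l : List Ltr) : ySign l • ew (l ++ [1]) = wrd l * -Yh := by
  rw [ew, ← ySign, ySign_append_one, smul_smul, mul_neg, ySign_mul_self, wrd_append,
    neg_one_smul, mul_neg, Yh]

lemma mstE_singleton_one_left {l : List Ltr} (hl : l ≠ []) : mstE [1] l = ew l := by
  obtain ⟨b, bs, rfl⟩ := List.exists_cons_of_ne_nil hl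
  rw [mstE]
  simp

lemma mstE_singleton_one_right {l : List Ltr} (hl : l ≠ []) : mstE l [1] = ew l := by
  match l, hl with
  | [a], _ => rw [mstE]; simp
  | a :: a' :: as, _ => rw [mstE]; simp

lemma mstE_cons_cons (a b : Ltr) {l₁ l₂ : List Ltr} (h₁ : l₁ ≠ []) (h₂ : l₂ ≠ []) :
    mstE (a :: l₁) (b :: l₂) =
      eH (a * b) * mstE l₁ (b :: l₂) + eH (a * b) * mstE (a :: l₁) l₂
        - eH (a * b) * Xh * mstE l₁ l₂ := by
  obtain ⟨c, cs, rfl⟩ := List.exists_cons_of_ne_nil h₁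
  obtain ⟨d, ds, rfl⟩ := List.exists_cons_of_ne_nil h₂
  rw [mstE]

lemma starW_cons_cons (a b : Ltr) (u v : List Ltr) :
    starW (a :: u) (b :: v) =
      cc1 a b • (ellt a b * starW u (b :: v)) + cc2 a b • (ellt a b * starW (a :: u) v)
        + cc3 a b • (ellt a b * Xh * starW u v) := by
  rw [starW]

lemma cc1_smul_ellt_mul (a b : Ltr) (m : H) :
    cc1 a b • (ellt a b * m) = ySign [a] • (eH (a * b) * m) := by
  fin_cases a <;> fin_cases b <;> simp [cc1, ellt, eH, ySign]

lemma cc2_smul_ellt_mul (a b : Ltr) (m : H) :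
    cc2 a b • (ellt a b * m) = ySign [b] • (eH (a * b) * m) := by
  fin_cases a <;> fin_cases b <;> simp [cc2, ellt, eH, ySign]

lemma cc3_smul_ellt_mul (a b : Ltr) (m : H) :
    cc3 a b • (ellt a b * (Xh * m)) = -(ySign [a] * ySign [b]) • (eH (a * b) * (Xh * m)) := by
  fin_cases a <;> fin_cases b <;> simp [cc3, ellt, eH, ySign]

theorem ySign_smul_mstE_append_one : ∀ u v : List Ltr,
    (ySign u * ySign v) • mstE (u ++ [1]) (v ++ [1]) = starW u v * -Yh
  | [], v => by
    rw [List.nil_append, mstE_singleton_one_left (by simp), ySign_nil, one_mul,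
      ySign_smul_ew_append_one, starW]
  | a :: u, [] => by
    rw [List.nil_append, mstE_singleton_one_right (by simp), ySign_nil, mul_one,
      ySign_smul_ew_append_one, starW]
    simp
  | a :: u, b :: v => by
    rw [starW_cons_cons]
    simp only [add_mul, smul_mul_assoc, mul_assoc]
    rw [cc1_smul_ellt_mul, cc2_smul_ellt_mul, cc3_smul_ellt_mul,
      ← ySign_smul_mstE_append_one u (b :: v), ← ySign_smul_mstE_append_one (a :: u) v,
      ← ySign_smul_mstE_append_one u v, List.cons_append, List.cons_append,
      mstE_cons_cons a b (by simp) (by simp), ySign_cons a u, ySign_cons b v]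
    simp only [mul_smul_comm, smul_smul, mul_assoc]
    module

lemma mst_eq_bilinExtend (f g : H) :
    mst f g = bilinExtend
      (fun u v => (ySign u.toList * ySign v.toList) • mstE u.toList v.toList) f g := by
  unfold mst bilinExtend
  refine Finsupp.sum_congr fun u _ => Finsupp.sum_congr fun v _ => ?_
  rw [smul_smul, ySign, ySign]
  congr 1
  ring

lemma star_eq_bilinExtend (f g : H) :
    star f g = bilinExtend (fun u v => starW u.toList v.toList) f g := rfl

lemma single_mul_neg_Yh (u : FreeMonoid Ltr) (c : ℚ) :
    MonoidAlgebra.single u c * -Yh = MonoidAlgebra.single (u * FreeMonoid.ofList [1]) (-c) := by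
  rw [Yh, wrd, MonoidAlgebra.of_apply, mul_neg, MonoidAlgebra.single_mul_single, mul_one,
    MonoidAlgebra.single_neg]

/-- For all `w₁, w₂ ∈ 𝔥`, `w₁e₁ ⊛̃ w₂e₁ = (w₁ * w₂)e₁` with `e₁ = -y`. -/
theorem stmt5 (w₁ w₂ : H) :
    mst (w₁ * (-Yh)) (w₂ * (-Yh)) = star w₁ w₂ * (-Yh) := by
  rw [mst_eq_bilinExtend, star_eq_bilinExtend]
  induction w₁ using MonoidAlgebra.induction_linear with
  | zero => simp
  | add f f' hf hf' => rw [add_mul, bilinExtend_add_left, bilinExtend_add_left, add_mul, hf, hf']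
  | single u c =>
    induction w₂ using MonoidAlgebra.induction_linear with
    | zero => simp
    | add g g' hg hg' =>
      rw [add_mul, bilinExtend_add_right, bilinExtend_add_right, add_mul, hg, hg']
    | single v d =>
      rw [single_mul_neg_Yh, single_mul_neg_Yh, bilinExtend_single_single,
        bilinExtend_single_single, smul_mul_assoc, ← ySign_smul_mstE_append_one]
      simp only [FreeMonoid.toList_mul, FreeMonoid.toList_ofList, ySign_append_one, smul_smul]
      congr 1
      ring
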